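/- Triangle inequality for d_proj: If the cost function C is antipodally symmetric, then for all classes [p₀], [p₁], [p₂] in the projective line bundle one has d_proj([p₀],[p₁]) ≤ d_proj([p₀],[p₂]) + d_proj([p₂],[p₁]). -/

import Mathlib

open Set MeasureTheory
open scoped ENNReal

noncomputable section

/-- The orientation vector `n(θ) = (cos θ, sin θ)`. -/
def nvec (θ : ℝ) : ℝ × ℝ := (Real.cos θ, Real.sin θ)

/-- Euclidean dot product on `ℝ × ℝ`. -/
def dot (a b : ℝ × ℝ) : ℝ := a.1 * b.1 + a.2 * b.2

/-- Euclidean norm on `ℝ × ℝ`. -/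
def enorm2 (v : ℝ × ℝ) : ℝ := Real.sqrt (v.1 ^ 2 + v.2 ^ 2)

/-- A point of the space of positions and orientations: a position in `ℝ²`
together with an orientation vector in `ℝ²` (intended to be a unit vector). -/
abbrev Pt := (ℝ × ℝ) × (ℝ × ℝ)

/-- The antipode `p̄ = (x, -n)` of a point `p = (x, n)`. -/
def antipode (p : Pt) : Pt := (p.1, -p.2)

/-- A candidate curve, given by a spatial part `x` and an angular part `θ`. -/
structure Curve where
  x : ℝ → ℝ × ℝ
  th : ℝ → ℝ

/-- A map is piecewise continuously differentiable on `[0,1]`: it is continuous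
on `[0,1]` and, off a finite set, differentiable with continuous derivative. -/
def PiecewiseC1 {E : Type*} [NormedAddCommGroup E] [NormedSpace ℝ E] (f : ℝ → E) : Prop :=
  ContinuousOn f (Icc 0 1) ∧
    ∃ s : Finset ℝ, ∀ t ∈ Icc (0 : ℝ) 1 \ (s : Set ℝ),
      DifferentiableAt ℝ f t ∧ ContinuousAt (deriv f) t

namespace Curve

/-- Both components of the curve are piecewise `C¹`. -/
def Admissible (γ : Curve) : Prop := PiecewiseC1 γ.x ∧ PiecewiseC1 γ.th

/-- The spatial control `u¹(t) = ẋ(t) ⬝ n(θ(t))`. -/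
def u1 (γ : Curve) (t : ℝ) : ℝ := dot (deriv γ.x t) (nvec (γ.th t))

/-- The angular control `u³(t) = θ̇(t)`. -/
def u3 (γ : Curve) (t : ℝ) : ℝ := deriv γ.th t

/-- Horizontality: wherever the spatial derivative exists,
`ẋ(t) ∈ span {n(θ(t))}`. -/
def Horizontal (γ : Curve) : Prop :=
  ∀ t ∈ Icc (0 : ℝ) 1, DifferentiableAt ℝ γ.x t →
    ∃ c : ℝ, deriv γ.x t = c • nvec (γ.th t)

/-- Boundary conditions: the curve joins `p₀` to `p₁` (the angular boundary
conditions hold modulo `2π`, which is expressed via the orientation vectors). -/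
def Joins (γ : Curve) (p₀ p₁ : Pt) : Prop :=
  γ.x 0 = p₀.1 ∧ γ.x 1 = p₁.1 ∧ nvec (γ.th 0) = p₀.2 ∧ nvec (γ.th 1) = p₁.2

end Curve

/-- The length `L(γ) = ∫₀¹ C(x(t), n(θ(t))) √(ξ² u¹(t)² + u³(t)²) dt`. -/
def length (ξ : ℝ) (C : Pt → ℝ) (γ : Curve) : ℝ :=
  ∫ t in (0 : ℝ)..1,
    C (γ.x t, nvec (γ.th t)) * Real.sqrt (ξ ^ 2 * γ.u1 t ^ 2 + γ.u3 t ^ 2)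

/-- `Γ₀(p₀,p₁)`: horizontal admissible candidate curves from `p₀` to `p₁`. -/
def Gamma0 (p₀ p₁ : Pt) : Set Curve :=
  {γ | γ.Admissible ∧ γ.Horizontal ∧ γ.Joins p₀ p₁}

/-- `Γ₀⁺(p₀,p₁)`: members of `Γ₀(p₀,p₁)` with `u¹ ≥ 0` wherever defined. -/
def Gamma0plus (p₀ p₁ : Pt) : Set Curve :=
  {γ ∈ Gamma0 p₀ p₁ | ∀ t ∈ Icc (0 : ℝ) 1, DifferentiableAt ℝ γ.x t → 0 ≤ γ.u1 t}

/-- `Γ₀⁻(p₀,p₁)`: members of `Γ₀(p₀,p₁)` with `u¹ ≤ 0` wherever defined. -/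
def Gamma0minus (p₀ p₁ : Pt) : Set Curve :=
  {γ ∈ Gamma0 p₀ p₁ | ∀ t ∈ Icc (0 : ℝ) 1, DifferentiableAt ℝ γ.x t → γ.u1 t ≤ 0}

/-- The sub-Riemannian distance `d_F₀` (with `inf ∅ = +∞`). -/
def dF0 (ξ : ℝ) (C : Pt → ℝ) (p₀ p₁ : Pt) : ℝ≥0∞ :=
  ⨅ γ ∈ Gamma0 p₀ p₁, ENNReal.ofReal (length ξ C γ)

/-- The forward (asymmetric) Finsler distance `d_F₀⁺` (with `inf ∅ = +∞`). -/
def dF0plus (ξ : ℝ) (C : Pt → ℝ) (p₀ p₁ : Pt) : ℝ≥0∞ :=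
  ⨅ γ ∈ Gamma0plus p₀ p₁, ENNReal.ofReal (length ξ C γ)

/-- The backward Finsler distance `d_F₀⁻` (with `inf ∅ = +∞`). -/
def dF0minus (ξ : ℝ) (C : Pt → ℝ) (p₀ p₁ : Pt) : ℝ≥0∞ :=
  ⨅ γ ∈ Gamma0minus p₀ p₁, ENNReal.ofReal (length ξ C γ)

/-- The cusp-free model `d_c` on the projective line bundle:
the minimum of `d_F₀⁺` over representatives `q₀ ∈ [p₀] = {p₀, p̄₀}` and
`q₁ ∈ [p₁] = {p₁, p̄₁}`. -/
def dc (ξ : ℝ) (C : Pt → ℝ) (p₀ p₁ : Pt) : ℝ≥0∞ :=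
  min (min (dF0plus ξ C p₀ p₁) (dF0plus ξ C p₀ (antipode p₁)))
      (min (dF0plus ξ C (antipode p₀) p₁) (dF0plus ξ C (antipode p₀) (antipode p₁)))

/-- The projective line bundle model `d_proj`:
the minimum of `d_F₀` over representatives of the classes. -/
def dproj (ξ : ℝ) (C : Pt → ℝ) (p₀ p₁ : Pt) : ℝ≥0∞ :=
  min (min (dF0 ξ C p₀ p₁) (dF0 ξ C p₀ (antipode p₁)))
      (min (dF0 ξ C (antipode p₀) p₁) (dF0 ξ C (antipode p₀) (antipode p₁)))

/-- `Γᶜ([p₀],[p₁])`: curves between representatives of the two classes whose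
spatial control has a constant sign (nonnegative or nonpositive everywhere). -/
def GammaC (p₀ p₁ : Pt) : Set Curve :=
  (Gamma0plus p₀ p₁ ∪ Gamma0minus p₀ p₁) ∪
  (Gamma0plus p₀ (antipode p₁) ∪ Gamma0minus p₀ (antipode p₁)) ∪
  (Gamma0plus (antipode p₀) p₁ ∪ Gamma0minus (antipode p₀) p₁) ∪
  (Gamma0plus (antipode p₀) (antipode p₁) ∪ Gamma0minus (antipode p₀) (antipode p₁))

/-- The cost function `C` is antipodally symmetric. -/
def AntipodallySymmetric (C : Pt → ℝ) : Prop :=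
  ∀ x n : ℝ × ℝ, C (x, n) = C (x, -n)

/-- Distance on the circle: `ρ(θ₀, θ₁) = min_{k ∈ ℤ} |θ₁ - θ₀ + 2πk|`. -/
def rho (θ₀ θ₁ : ℝ) : ℝ :=
  sInf (Set.range fun k : ℤ => |θ₁ - θ₀ + 2 * Real.pi * k|)

/-!
Concatenating two horizontal curves, with a pause at the junction (so that the glued curve is
constant near the junction points and horizontality cannot fail there) and after shifting the
angle of the second curve by a multiple of `2π` so that the angles match, yields a horizontal
curve whose length is at most the sum of the two lengths; hence `d_F₀` satisfies the triangle
inequality. Adding `π` to the angle maps `Γ₀(p, q)` onto `Γ₀(p̄, q̄)`, and for an antipodally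
symmetric cost it preserves length, so `d_F₀(p̄, q̄) = d_F₀(p, q)` and
`d_proj([p], [q]) = min (d_F₀(p, q), d_F₀(p, q̄))`. When the two minima on the right of the
triangle inequality pick different representatives of `[p₂]`, the second leg is flipped to its
antipodal copy before applying the triangle inequality for `d_F₀`.
-/

open Filter Topology

theorem nvec_add_int_mul_two_pi (θ : ℝ) (k : ℤ) : nvec (θ + k * (2 * Real.pi)) = nvec θ := by
  simp only [nvec, Real.cos_add_int_mul_two_pi, Real.sin_add_int_mul_two_pi]

theorem nvec_add_pi (θ : ℝ) : nvec (θ + Real.pi) = -nvec θ := by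
  simp only [nvec, Real.cos_add_pi, Real.sin_add_pi, Prod.neg_mk]

theorem exists_int_of_nvec_eq {a b : ℝ} (h : nvec a = nvec b) :
    ∃ k : ℤ, a = b + k * (2 * Real.pi) := by
  obtain ⟨k, hk⟩ := Real.Angle.angle_eq_iff_two_pi_dvd_sub.mp
    (Real.Angle.cos_sin_inj (congrArg Prod.fst h) (congrArg Prod.snd h))
  exact ⟨k, by linarith⟩

theorem dot_smul_left (c : ℝ) (a b : ℝ × ℝ) : dot (c • a) b = c * dot a b := by
  simp only [dot, Prod.smul_fst, Prod.smul_snd, smul_eq_mul]; ring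

theorem dot_smul_right (c : ℝ) (a b : ℝ × ℝ) : dot a (c • b) = c * dot a b := by
  simp only [dot, Prod.smul_fst, Prod.smul_snd, smul_eq_mul]; ring

theorem antipode_antipode (p : Pt) : antipode (antipode p) = p := by
  simp [antipode]

section ConcatPause

variable {E : Type*} {f g : ℝ → E} {t : ℝ}

def concatPause (f g : ℝ → E) (t : ℝ) : E :=
  if t ≤ 1 / 3 then f (3 * t) else if t ≤ 2 / 3 then f 1 else g (3 * t - 2)

theorem concatPause_of_le (ht : t ≤ 1 / 3) : concatPause f g t = f (3 * t) :=
  if_pos ht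

theorem concatPause_of_mem_Icc (ht : t ∈ Icc (1 / 3 : ℝ) (2 / 3)) : concatPause f g t = f 1 := by
  rcases ht.1.eq_or_lt with rfl | h
  · rw [concatPause_of_le le_rfl]; norm_num
  · rw [concatPause, if_neg h.not_ge, if_pos ht.2]

theorem concatPause_of_gt (ht : 2 / 3 < t) : concatPause f g t = g (3 * t - 2) := by
  rw [concatPause, if_neg (not_le.2 (by linarith)), if_neg ht.not_ge]

theorem concatPause_zero : concatPause f g 0 = f 0 := by
  rw [concatPause_of_le (by norm_num), mul_zero]

theorem concatPause_one : concatPause f g 1 = g 1 := by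
  rw [concatPause_of_gt (by norm_num)]; norm_num

theorem concatPause_eventuallyEq_left (ht : t < 1 / 3) :
    concatPause f g =ᶠ[𝓝 t] fun s => f (3 * s) :=
  eventuallyEq_of_mem (Iio_mem_nhds ht) fun _ hs => concatPause_of_le (le_of_lt hs)

theorem concatPause_eventuallyEq_mid (ht : t ∈ Ioo (1 / 3 : ℝ) (2 / 3)) :
    concatPause f g =ᶠ[𝓝 t] fun _ => f 1 :=
  eventuallyEq_of_mem (Ioo_mem_nhds ht.1 ht.2) fun _ hs =>
    concatPause_of_mem_Icc (Ioo_subset_Icc_self hs)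

theorem concatPause_eventuallyEq_right (ht : 2 / 3 < t) :
    concatPause f g =ᶠ[𝓝 t] fun s => g (3 * s - 2) :=
  eventuallyEq_of_mem (Ioi_mem_nhds ht) fun _ hs => concatPause_of_gt hs

theorem continuousOn_concatPause [TopologicalSpace E] (hf : ContinuousOn f (Icc 0 1))
    (hg : ContinuousOn g (Icc 0 1)) (hfg : f 1 = g 0) :
    ContinuousOn (concatPause f g) (Icc 0 1) := by
  have left : ContinuousOn (concatPause f g) (Icc 0 (1 / 3)) :=
    (hf.comp (f := fun s => 3 * s) (by fun_prop)
      fun s hs => ⟨by linarith [hs.1], by linarith [hs.2]⟩).congr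
      fun _ hs => concatPause_of_le hs.2
  have mid : ContinuousOn (concatPause f g) (Icc (1 / 3) (2 / 3)) :=
    continuousOn_const.congr fun _ hs => concatPause_of_mem_Icc hs
  have right : ContinuousOn (concatPause f g) (Icc (2 / 3) 1) := by
    refine (hg.comp (f := fun s => 3 * s - 2) (by fun_prop)
      fun s hs => ⟨by linarith [hs.1], by linarith [hs.2]⟩).congr fun s hs => ?_
    rcases hs.1.eq_or_lt with rfl | h
    · rw [concatPause_of_mem_Icc ⟨by norm_num, le_rfl⟩, hfg, Function.comp_apply]; norm_num
    · exact concatPause_of_gt h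
  rw [← Icc_union_Icc_eq_Icc (b := 1 / 3) (by norm_num) (by norm_num),
    ← Icc_union_Icc_eq_Icc (a := 1 / 3) (b := 2 / 3) (by norm_num) (by norm_num)]
  exact left.union_of_isClosed (mid.union_of_isClosed right isClosed_Icc isClosed_Icc)
    isClosed_Icc (isClosed_Icc.union isClosed_Icc)

end ConcatPause

section Calculus

variable {E : Type*} [NormedAddCommGroup E] [NormedSpace ℝ E] {f g : ℝ → E} {a b t : ℝ}

def C1At (f : ℝ → E) (t : ℝ) : Prop :=
  DifferentiableAt ℝ f t ∧ ContinuousAt (deriv f) t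

theorem C1At.congr_of_eventuallyEq (hf : C1At f t) (h : g =ᶠ[𝓝 t] f) : C1At g t :=
  ⟨hf.1.congr_of_eventuallyEq h, hf.2.congr h.deriv.symm⟩

theorem c1At_const (v : E) (t : ℝ) : C1At (fun _ => v) t :=
  ⟨differentiableAt_const v, by simpa only [deriv_const'] using continuousAt_const⟩

theorem deriv_comp_mul_add (f : ℝ → E) (a b t : ℝ) :
    deriv (fun s => f (a * s + b)) t = a • deriv f (a * t + b) := by
  have h := deriv_comp_mul_left a (fun u => f (u + b)) t
  rwa [deriv_comp_add_const] at h

theorem differentiableAt_comp_mul_add_iff (ha : a ≠ 0) :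
    DifferentiableAt ℝ (fun s => f (a * s + b)) t ↔ DifferentiableAt ℝ f (a * t + b) := by
  refine ⟨fun h => ?_, fun h => h.comp t (by fun_prop)⟩
  have hf : f = fun y => f (a * ((y - b) / a) + b) := by
    funext y; congr 1; field_simp; ring
  have ht : (a * t + b - b) / a = t := by field_simp; ring
  rw [hf]
  exact DifferentiableAt.comp (g := fun s => f (a * s + b)) _ (by rwa [ht]) (by fun_prop)

theorem C1At.comp_mul_add (hf : C1At f (a * t + b)) : C1At (fun s => f (a * s + b)) t := by
  refine ⟨hf.1.comp t (by fun_prop), ?_⟩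
  rw [funext (deriv_comp_mul_add f a b)]
  exact (hf.2.comp (f := fun s => a * s + b) (by fun_prop)).const_smul a

theorem PiecewiseC1.add_const (hf : PiecewiseC1 f) (c : E) : PiecewiseC1 fun t => f t + c := by
  obtain ⟨hcont, s, hs⟩ := hf
  refine ⟨hcont.add continuousOn_const, s, fun t ht => ?_⟩
  obtain ⟨hd, hderiv⟩ := hs t ht
  exact ⟨hd.add_const c, by simpa only [deriv_add_const'] using hderiv⟩

-- `concatPause f g` is constant on `[1/3, 2/3]`, which also pins its derivative at the junctions.
theorem deriv_concatPause_of_mem_Icc (ht : t ∈ Icc (1 / 3 : ℝ) (2 / 3)) :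
    deriv (concatPause f g) t = 0 := by
  by_cases hd : DifferentiableAt ℝ (concatPause f g) t
  · have hconst : HasDerivWithinAt (concatPause f g) 0 (Icc (1 / 3) (2 / 3)) t :=
      (hasDerivWithinAt_const t _ (f 1)).congr (fun _ hs => concatPause_of_mem_Icc hs)
        (concatPause_of_mem_Icc ht)
    exact (uniqueDiffOn_Icc (by norm_num) t ht).eq_deriv _ hd.hasDerivAt.hasDerivWithinAt hconst
  · exact deriv_zero_of_not_differentiableAt hd

theorem piecewiseC1_concatPause (hf : PiecewiseC1 f) (hg : PiecewiseC1 g) (hfg : f 1 = g 0) :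
    PiecewiseC1 (concatPause f g) := by
  obtain ⟨hfc, sf, hsf⟩ := hf
  obtain ⟨hgc, sg, hsg⟩ := hg
  refine ⟨continuousOn_concatPause hfc hgc hfg,
    {1 / 3, 2 / 3} ∪ sf.image (fun u => u / 3) ∪ sg.image (fun u => (u + 2) / 3),
    fun t ⟨ht, hts⟩ => ?_⟩
  simp only [Finset.coe_union, Finset.coe_insert, Finset.coe_singleton, Finset.coe_image,
    mem_union, mem_insert_iff, mem_singleton_iff, mem_image, Finset.mem_coe, not_or,
    not_exists, not_and] at hts
  obtain ⟨⟨⟨h13, h23⟩, hsf'⟩, hsg'⟩ := hts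
  rcases lt_or_gt_of_ne h13 with hlt | hgt
  · have hf3 : C1At f (3 * t + 0) := by
      rw [add_zero]
      exact hsf _ ⟨⟨by linarith [ht.1], by linarith⟩, fun h => hsf' _ h (by ring)⟩
    refine C1At.congr_of_eventuallyEq ?_ (concatPause_eventuallyEq_left hlt)
    simpa only [add_zero] using hf3.comp_mul_add
  rcases lt_or_gt_of_ne h23 with hlt | hgt'
  · exact (c1At_const (f 1) t).congr_of_eventuallyEq (concatPause_eventuallyEq_mid ⟨hgt, hlt⟩)
  · have hg3 : C1At g (3 * t + -2) := by
      rw [← sub_eq_add_neg]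
      exact hsg _ ⟨⟨by linarith, by linarith [ht.2]⟩, fun h => hsg' _ h (by ring)⟩
    refine C1At.congr_of_eventuallyEq ?_ (concatPause_eventuallyEq_right hgt')
    simpa only [← sub_eq_add_neg] using hg3.comp_mul_add

end Calculus

namespace Curve

variable {ξ : ℝ} {C : Pt → ℝ} {γ σ τ : Curve} {a b c t : ℝ} {p q : Pt}

def EqNear (t : ℝ) (τ σ : Curve) : Prop :=
  τ.x =ᶠ[𝓝 t] σ.x ∧ τ.th =ᶠ[𝓝 t] σ.th

def HorizontalAt (γ : Curve) (t : ℝ) : Prop :=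
  DifferentiableAt ℝ γ.x t → ∃ c : ℝ, deriv γ.x t = c • nvec (γ.th t)

def lengthDensity (ξ : ℝ) (C : Pt → ℝ) (γ : Curve) (t : ℝ) : ℝ :=
  C (γ.x t, nvec (γ.th t)) * Real.sqrt (ξ ^ 2 * γ.u1 t ^ 2 + γ.u3 t ^ 2)

theorem length_eq_integral_lengthDensity :
    length ξ C γ = ∫ t in (0 : ℝ)..1, γ.lengthDensity ξ C t :=
  rfl

def reparam (γ : Curve) (a b : ℝ) : Curve :=
  ⟨fun s => γ.x (a * s + b), fun s => γ.th (a * s + b)⟩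

def concat (γ σ : Curve) : Curve :=
  ⟨concatPause γ.x σ.x, concatPause γ.th σ.th⟩

def addAngle (γ : Curve) (c : ℝ) : Curve :=
  ⟨γ.x, fun t => γ.th t + c⟩

theorem EqNear.lengthDensity_eq (h : EqNear t τ σ) :
    τ.lengthDensity ξ C t = σ.lengthDensity ξ C t := by
  simp only [lengthDensity, u1, u3, h.1.eq_of_nhds, h.2.eq_of_nhds, h.1.deriv_eq, h.2.deriv_eq]

theorem EqNear.horizontalAt (h : EqNear t τ σ) (hσ : σ.HorizontalAt t) : τ.HorizontalAt t := by
  intro hd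
  rw [h.1.deriv_eq, h.2.eq_of_nhds]
  exact hσ (hd.congr_of_eventuallyEq h.1.symm)

theorem lengthDensity_reparam (ha : 0 ≤ a) :
    (γ.reparam a b).lengthDensity ξ C t = a * γ.lengthDensity ξ C (a * t + b) := by
  have hu1 : (γ.reparam a b).u1 t = a * γ.u1 (a * t + b) := by
    simp only [u1, reparam, deriv_comp_mul_add, dot_smul_left]
  have hu3 : (γ.reparam a b).u3 t = a * γ.u3 (a * t + b) := by
    simp only [u3, reparam, deriv_comp_mul_add, smul_eq_mul]
  simp only [lengthDensity, hu1, hu3]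
  rw [show ξ ^ 2 * (a * γ.u1 (a * t + b)) ^ 2 + (a * γ.u3 (a * t + b)) ^ 2
      = a ^ 2 * (ξ ^ 2 * γ.u1 (a * t + b) ^ 2 + γ.u3 (a * t + b) ^ 2) by ring,
    Real.sqrt_mul (sq_nonneg a), Real.sqrt_sq ha]
  simp only [reparam]
  ring

theorem HorizontalAt.reparam (ha : a ≠ 0) (hγ : γ.HorizontalAt (a * t + b)) :
    (γ.reparam a b).HorizontalAt t := by
  intro hd
  obtain ⟨c, hc⟩ := hγ ((differentiableAt_comp_mul_add_iff ha).1 hd)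
  refine ⟨a * c, ?_⟩
  simp only [Curve.reparam, deriv_comp_mul_add, hc, smul_smul]

theorem concat_eqNear_left (ht : t < 1 / 3) : EqNear t (γ.concat σ) (γ.reparam 3 0) := by
  simpa only [EqNear, concat, reparam, add_zero] using
    ⟨concatPause_eventuallyEq_left ht, concatPause_eventuallyEq_left ht⟩

theorem concat_eqNear_right (ht : 2 / 3 < t) : EqNear t (γ.concat σ) (σ.reparam 3 (-2)) := by
  simpa only [EqNear, concat, reparam, ← sub_eq_add_neg] using
    ⟨concatPause_eventuallyEq_right ht, concatPause_eventuallyEq_right ht⟩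

theorem concat_lengthDensity_of_mem_Icc (ht : t ∈ Icc (1 / 3 : ℝ) (2 / 3)) :
    (γ.concat σ).lengthDensity ξ C t = 0 := by
  simp [lengthDensity, u1, u3, concat, deriv_concatPause_of_mem_Icc ht, dot]

theorem concat_horizontalAt_of_mem_Icc (ht : t ∈ Icc (1 / 3 : ℝ) (2 / 3)) :
    (γ.concat σ).HorizontalAt t :=
  fun _ => ⟨0, by simp only [concat, deriv_concatPause_of_mem_Icc ht, zero_smul]⟩

theorem Horizontal.concat (hγ : γ.Horizontal) (hσ : σ.Horizontal) : (γ.concat σ).Horizontal := by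
  intro t ht
  rcases lt_or_ge t (1 / 3) with hlt | hge
  · exact (concat_eqNear_left hlt).horizontalAt
      (HorizontalAt.reparam three_ne_zero (hγ _ ⟨by linarith [ht.1], by linarith⟩))
  rcases le_or_gt t (2 / 3) with hle | hgt
  · exact concat_horizontalAt_of_mem_Icc ⟨hge, hle⟩
  · exact (concat_eqNear_right hgt).horizontalAt
      (HorizontalAt.reparam three_ne_zero (hσ _ ⟨by linarith, by linarith [ht.2]⟩))

theorem concat_mem_Gamma0 {m : Pt} (hγ : γ ∈ Gamma0 p m) (hσ : σ ∈ Gamma0 m q)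
    (hth : γ.th 1 = σ.th 0) : γ.concat σ ∈ Gamma0 p q := by
  obtain ⟨⟨hγx, hγth⟩, hγh, hγ0, hγ1, hγn0, -⟩ := hγ
  obtain ⟨⟨hσx, hσth⟩, hσh, hσ0, hσ1, -, hσn1⟩ := hσ
  refine ⟨⟨piecewiseC1_concatPause hγx hσx (hγ1.trans hσ0.symm),
    piecewiseC1_concatPause hγth hσth hth⟩, hγh.concat hσh, concatPause_zero.trans hγ0,
    concatPause_one.trans hσ1, ?_, ?_⟩
  · rw [← hγn0]; exact congrArg nvec concatPause_zero
  · rw [← hσn1]; exact congrArg nvec concatPause_one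

theorem integral_lengthDensity_eq_length {u w : ℝ} (ha : 0 < a) (hu : a * u + b = 0)
    (hw : a * w + b = 1) (h : ∀ t ∈ Ioo u w, EqNear t τ (γ.reparam a b)) :
    ∫ t in u..w, τ.lengthDensity ξ C t = length ξ C γ := by
  have huw : u ≤ w := by nlinarith
  rw [intervalIntegral.integral_congr_Ioo_of_le huw
      fun t ht => (h t ht).lengthDensity_eq.trans (lengthDensity_reparam ha.le),
    intervalIntegral.integral_const_mul,
    intervalIntegral.integral_comp_mul_add (fun s => γ.lengthDensity ξ C s) ha.ne', hu, hw,
    smul_eq_mul, ← mul_assoc, mul_inv_cancel₀ ha.ne', one_mul]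
  rfl

theorem length_concat_of_intervalIntegrable
    (hint : IntervalIntegrable ((γ.concat σ).lengthDensity ξ C) volume 0 1) :
    length ξ C (γ.concat σ) = length ξ C γ + length ξ C σ := by
  have sub : ∀ {u w : ℝ}, u ∈ Icc (0 : ℝ) 1 → w ∈ Icc (0 : ℝ) 1 →
      IntervalIntegrable ((γ.concat σ).lengthDensity ξ C) volume u w := fun hu hw =>
    hint.mono_set (uIcc_subset_uIcc (by rwa [uIcc_of_le zero_le_one])
      (by rwa [uIcc_of_le zero_le_one]))
  have left : ∫ t in (0 : ℝ)..(1 / 3), (γ.concat σ).lengthDensity ξ C t = length ξ C γ :=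
    integral_lengthDensity_eq_length three_pos (by norm_num) (by norm_num)
      fun _ ht => concat_eqNear_left ht.2
  have mid : ∫ t in (1 / 3 : ℝ)..(2 / 3), (γ.concat σ).lengthDensity ξ C t = 0 := by
    rw [intervalIntegral.integral_congr (g := fun _ => 0) fun t ht =>
      concat_lengthDensity_of_mem_Icc (by rwa [uIcc_of_le (by norm_num)] at ht)]
    exact intervalIntegral.integral_zero
  have right : ∫ t in (2 / 3 : ℝ)..1, (γ.concat σ).lengthDensity ξ C t = length ξ C σ :=
    integral_lengthDensity_eq_length three_pos (by norm_num) (by norm_num)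
      fun _ ht => concat_eqNear_right ht.1
  rw [length_eq_integral_lengthDensity,
    ← intervalIntegral.integral_add_adjacent_intervals (b := 2 / 3)
      (sub (by norm_num) (by norm_num)) (sub (by norm_num) (by norm_num)),
    ← intervalIntegral.integral_add_adjacent_intervals (b := 1 / 3)
      (sub (by norm_num) (by norm_num)) (sub (by norm_num) (by norm_num)),
    left, mid, right, add_zero]

theorem ofReal_length_concat_le :
    ENNReal.ofReal (length ξ C (γ.concat σ)) ≤
      ENNReal.ofReal (length ξ C γ) + ENNReal.ofReal (length ξ C σ) := by
  by_cases hint : IntervalIntegrable ((γ.concat σ).lengthDensity ξ C) volume 0 1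
  · rw [length_concat_of_intervalIntegrable hint]
    exact ENNReal.ofReal_add_le
  · -- a non-integrable density has integral `0` by convention
    rw [length_eq_integral_lengthDensity, intervalIntegral.integral_undef hint,
      ENNReal.ofReal_zero]
    exact zero_le

theorem addAngle_mem_Gamma0 {ε : ℝ} (hε : ε ^ 2 = 1) (hc : ∀ θ, nvec (θ + c) = ε • nvec θ)
    (hγ : γ ∈ Gamma0 p q) : γ.addAngle c ∈ Gamma0 (p.1, ε • p.2) (q.1, ε • q.2) := by
  obtain ⟨⟨hx, hth⟩, hhor, h0, h1, hn0, hn1⟩ := hγ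
  refine ⟨⟨hx, hth.add_const c⟩, fun t ht hd => ?_, h0, h1, ?_, ?_⟩
  · obtain ⟨k, hk⟩ := hhor t ht hd
    refine ⟨k * ε, ?_⟩
    simp only [addAngle, hc, smul_smul, hk, mul_assoc, ← sq, hε, mul_one]
  · simp only [addAngle, hc, hn0]
  · simp only [addAngle, hc, hn1]

theorem length_addAngle {ε : ℝ} (hε : ε ^ 2 = 1) (hc : ∀ θ, nvec (θ + c) = ε • nvec θ)
    (hC : ∀ x n, C (x, ε • n) = C (x, n)) : length ξ C (γ.addAngle c) = length ξ C γ := by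
  have hu1 : ∀ t, (γ.addAngle c).u1 t = ε * γ.u1 t := fun t => by
    simp only [u1, addAngle, hc, dot_smul_right]
  have hu3 : ∀ t, (γ.addAngle c).u3 t = γ.u3 t := fun t => by
    simp only [u3, addAngle, deriv_add_const]
  simp only [length_eq_integral_lengthDensity, lengthDensity, hu1, hu3, mul_pow, hε, one_mul]
  simp only [addAngle, hc, hC]

end Curve

open Curve

theorem dF0_le_length {ξ : ℝ} {C : Pt → ℝ} {p q : Pt} {γ : Curve} (hγ : γ ∈ Gamma0 p q) :
    dF0 ξ C p q ≤ ENNReal.ofReal (length ξ C γ) :=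
  iInf₂_le γ hγ

theorem dF0_triangle (ξ : ℝ) (C : Pt → ℝ) (p m q : Pt) :
    dF0 ξ C p q ≤ dF0 ξ C p m + dF0 ξ C m q := by
  refine ENNReal.le_iInf₂_add_iInf₂ fun γ hγ σ hσ => ?_
  have hjunction : nvec (γ.th 1) = nvec (σ.th 0) := hγ.2.2.2.2.2.trans hσ.2.2.2.2.1.symm
  obtain ⟨k, hk⟩ := exists_int_of_nvec_eq hjunction
  have hc : ∀ θ, nvec (θ + k * (2 * Real.pi)) = (1 : ℝ) • nvec θ := fun θ => by
    rw [one_smul, nvec_add_int_mul_two_pi]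
  have hσ' : σ.addAngle (k * (2 * Real.pi)) ∈ Gamma0 m q := by
    simpa only [one_smul] using addAngle_mem_Gamma0 (one_pow 2) hc hσ
  calc dF0 ξ C p q
      ≤ ENNReal.ofReal (length ξ C (γ.concat (σ.addAngle (k * (2 * Real.pi))))) :=
        dF0_le_length (concat_mem_Gamma0 hγ hσ' hk)
    _ ≤ ENNReal.ofReal (length ξ C γ) +
          ENNReal.ofReal (length ξ C (σ.addAngle (k * (2 * Real.pi)))) :=
        ofReal_length_concat_le
    _ = ENNReal.ofReal (length ξ C γ) + ENNReal.ofReal (length ξ C σ) := by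
        rw [length_addAngle (one_pow 2) hc fun x n => by rw [one_smul]]

theorem dF0_antipode_le {ξ : ℝ} {C : Pt → ℝ} (hsym : AntipodallySymmetric C) (p q : Pt) :
    dF0 ξ C (antipode p) (antipode q) ≤ dF0 ξ C p q := by
  refine le_iInf₂ fun γ hγ => ?_
  have hc : ∀ θ, nvec (θ + Real.pi) = (-1 : ℝ) • nvec θ := fun θ => by
    rw [nvec_add_pi, neg_one_smul]
  calc dF0 ξ C (antipode p) (antipode q)
      ≤ ENNReal.ofReal (length ξ C (γ.addAngle Real.pi)) :=
        dF0_le_length (by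
          simpa only [antipode, neg_one_smul] using addAngle_mem_Gamma0 (by norm_num) hc hγ)
    _ = ENNReal.ofReal (length ξ C γ) := by
        rw [length_addAngle (by norm_num) hc fun x n => by rw [neg_one_smul, ← hsym]]

theorem dF0_antipode_antipode {ξ : ℝ} {C : Pt → ℝ} (hsym : AntipodallySymmetric C) (p q : Pt) :
    dF0 ξ C (antipode p) (antipode q) = dF0 ξ C p q :=
  le_antisymm (dF0_antipode_le hsym p q)
    (by simpa only [antipode_antipode] using dF0_antipode_le hsym (antipode p) (antipode q))

theorem dproj_eq_min {ξ : ℝ} {C : Pt → ℝ} (hsym : AntipodallySymmetric C) (p q : Pt) :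
    dproj ξ C p q = min (dF0 ξ C p q) (dF0 ξ C p (antipode q)) := by
  rw [dproj, dF0_antipode_antipode hsym, ← dF0_antipode_antipode hsym (antipode p) q,
    antipode_antipode, min_comm (dF0 ξ C p (antipode q)), min_self]

theorem dproj_triangle_general (ξ : ℝ) (C : Pt → ℝ) (hsym : AntipodallySymmetric C) (p₀ p₁ p₂ : Pt) :
    dproj ξ C p₀ p₁ ≤ dproj ξ C p₀ p₂ + dproj ξ C p₂ p₁ := by
  have tri := dF0_triangle ξ C
  have flip := dF0_antipode_antipode (ξ := ξ) hsym
  simp only [dproj_eq_min hsym]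
  rcases min_choice (dF0 ξ C p₀ p₂) (dF0 ξ C p₀ (antipode p₂)) with h₀ | h₀ <;>
    rcases min_choice (dF0 ξ C p₂ p₁) (dF0 ξ C p₂ (antipode p₁)) with h₁ | h₁ <;>
    rw [h₀, h₁]
  · exact min_le_of_left_le (tri _ _ _)
  · exact min_le_of_right_le (tri _ _ _)
  · rw [← flip p₂ p₁]
    exact min_le_of_right_le (tri _ _ _)
  · rw [← flip p₂ (antipode p₁), antipode_antipode]
    exact min_le_of_left_le (tri _ _ _)

/-- triangle inequality for `d_proj`. -/
theorem dproj_triangle (ξ δ : ℝ) (hξ : 0 < ξ) (hδ : 0 < δ)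
    (C : Pt → ℝ) (hC : Continuous C) (hCδ : ∀ q, δ ≤ C q)
    (hsym : AntipodallySymmetric C) (p₀ p₁ p₂ : Pt) :
    dproj ξ C p₀ p₁ ≤ dproj ξ C p₀ p₂ + dproj ξ C p₂ p₁ :=
  dproj_triangle_general ξ C hsym p₀ p₁ p₂
end
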